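/- arXiv:2405.05246 — 3 statements merged into one kernel-verified Lean document; each statement's English description precedes it below -/
import Mathlib

section
/- Assume (A0). Then the sequence (α_k/β_k)_{k≥1} is strictly decreasing and positive, so the limit v_0 := −lim_{k→∞} α_k/β_k exists; it satisfies v_0 ∈ (−a_1, 0], and it is given by v_0 = −(1/a_1 + b_1/(a_1 a_2) + b_1 b_2/(a_1 a_2 a_3) + ⋯)^{−1}, where v_0 = 0 when the series 1/a_1 + b_1/(a_1 a_2) + b_1 b_2/(a_1 a_2 a_3) + ⋯ diverges. -/
open Finset Filter Topology MeasureTheory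
open scoped ENNReal

/-- `alphaSeq a b k = (a_1 ⋯ a_k)/(b_1 ⋯ b_k)`, with `alphaSeq a b 0 = 1`. -/
noncomputable def alphaSeq (a b : ℕ → ℝ) (k : ℕ) : ℝ :=
  ∏ i ∈ Finset.Icc 1 k, (a i / b i)

/-- `betaSeq a b k = 1/b_k + a_k/(b_k b_{k-1}) + ⋯ + (a_k ⋯ a_2)/(b_k ⋯ b_1)`,
with `betaSeq a b 0 = 0`. -/
noncomputable def betaSeq (a b : ℕ → ℝ) (k : ℕ) : ℝ :=
  ∑ j ∈ Finset.Icc 1 k, (∏ i ∈ Finset.Icc (j+1) k, a i) / (∏ i ∈ Finset.Icc j k, b i)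

/-- The stable traffic equation: `ρ 0 = 1` and
`(b_i + a_{i+1}) ρ_i = a_i ρ_{i-1} + b_{i+1} ρ_{i+1}` for all `i ≥ 1`. -/
def IsSTE (a b : ℕ → ℝ) (ρ : ℕ → ℝ) : Prop :=
  ρ 0 = 1 ∧ ∀ i, 1 ≤ i → (b i + a (i+1)) * ρ i = a i * ρ (i-1) + b (i+1) * ρ (i+1)

/-- An admissible solution of the stable traffic equation: moreover `ρ k ∈ (0,1)` for `k ≥ 1`. -/
def IsAdmissible (a b : ℕ → ℝ) (ρ : ℕ → ℝ) : Prop :=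
  IsSTE a b ρ ∧ ∀ k, 1 ≤ k → ρ k ∈ Set.Ioo (0:ℝ) 1

/-- The set `𝒱` of `v` such that `α + v β` is an admissible solution. -/
def speedSet (a b : ℕ → ℝ) : Set ℝ :=
  {v : ℝ | IsAdmissible a b (fun k => alphaSeq a b k + v * betaSeq a b k)}


lemma alpha_pos (a b : ℕ → ℝ) (ha : ∀ k, 1 ≤ k → 0 < a k) (hb : ∀ k, 1 ≤ k → 0 < b k)
    (k : ℕ) : 0 < alphaSeq a b k := by
  apply Finset.prod_pos
  intro i hi
  simp only [Finset.mem_Icc] at hi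
  exact div_pos (ha i hi.1) (hb i hi.1)

lemma alpha_succ (a b : ℕ → ℝ) (k : ℕ) :
    alphaSeq a b (k+1) = alphaSeq a b k * (a (k+1) / b (k+1)) := by
  unfold alphaSeq
  rw [Finset.prod_Icc_succ_top (by omega : 1 ≤ k+1)]

lemma beta_succ (a b : ℕ → ℝ) (k : ℕ) :
    betaSeq a b (k+1) = a (k+1) / b (k+1) * betaSeq a b k + 1 / b (k+1) := by
  unfold betaSeq
  rw [Finset.sum_Icc_succ_top (by omega : 1 ≤ k+1)]
  have h1 : ∀ j ∈ Finset.Icc 1 k,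
      (∏ i ∈ Finset.Icc (j+1) (k+1), a i) / (∏ i ∈ Finset.Icc j (k+1), b i)
      = a (k+1)/b (k+1) * ((∏ i ∈ Finset.Icc (j+1) k, a i) / (∏ i ∈ Finset.Icc j k, b i)) := by
    intro j hj
    simp only [Finset.mem_Icc] at hj
    rw [Finset.prod_Icc_succ_top (by omega : j+1 ≤ k+1),
        Finset.prod_Icc_succ_top (by omega : j ≤ k+1), mul_div_mul_comm]
    ring
  rw [Finset.sum_congr rfl h1, ← Finset.mul_sum]
  congr 1
  rw [Finset.Icc_eq_empty (by omega : ¬ (k+1+1 ≤ k+1)), Finset.prod_empty,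
      Finset.Icc_self, Finset.prod_singleton]

lemma beta_eq (a b : ℕ → ℝ) (ha : ∀ k, 1 ≤ k → 0 < a k) (hb : ∀ k, 1 ≤ k → 0 < b k)
    (k : ℕ) :
    betaSeq a b k = alphaSeq a b k * ∑ j ∈ Finset.range k, 1 / (a (j+1) * alphaSeq a b j) := by
  induction k with
  | zero => simp [betaSeq]
  | succ k ih =>
    rw [beta_succ, ih, alpha_succ, Finset.sum_range_succ]
    have hα := (alpha_pos a b ha hb k).ne'
    have haa := (ha (k+1) (by omega)).ne'
    have hbb := (hb (k+1) (by omega)).ne'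
    field_simp


/-- Under (A0), the sequence (alpha_k/beta_k), k ≥ 1, is strictly decreasing and
positive, hence the limit v0 := -lim alpha_k/beta_k exists; it lies in (-a_1, 0] and equals
-(sum_{k≥0} 1/(a_{k+1} alpha_k))⁻¹, computed in [0,∞] (so v0 = 0 when the series diverges). -/
theorem stmt2 (a b : ℕ → ℝ) (ha : ∀ k, 1 ≤ k → 0 < a k) (hb : ∀ k, 1 ≤ k → 0 < b k) :
    (∀ k, 1 ≤ k → 0 < alphaSeq a b k / betaSeq a b k) ∧
    (∀ k, 1 ≤ k → alphaSeq a b (k+1) / betaSeq a b (k+1)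
        < alphaSeq a b k / betaSeq a b k) ∧
    ∃ v0 : ℝ,
      Filter.Tendsto (fun k => alphaSeq a b k / betaSeq a b k) Filter.atTop (𝓝 (-v0)) ∧
      v0 ∈ Set.Ioc (-(a 1)) 0 ∧
      v0 = -((∑' k : ℕ, ENNReal.ofReal (1 / (a (k+1) * alphaSeq a b k)))⁻¹).toReal := by
  set c : ℕ → ℝ := fun j => 1 / (a (j+1) * alphaSeq a b j) with hc
  set S : ℕ → ℝ := fun k => ∑ j ∈ Finset.range k, c j with hS
  have hcpos : ∀ j, 0 < c j := fun j =>
    one_div_pos.mpr (mul_pos (ha (j+1) (by omega)) (alpha_pos a b ha hb j))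
  have hSpos : ∀ k, 1 ≤ k → 0 < S k := by
    intro k hk
    exact Finset.sum_pos (fun j _ => hcpos j) (by simp; omega)
  have hSmono : StrictMono S := strictMono_nat_of_lt_succ (fun n => by
    simp only [hS, Finset.sum_range_succ]
    linarith [hcpos n])
  have key : ∀ k, alphaSeq a b k / betaSeq a b k = 1 / S k := by
    intro k
    rw [beta_eq a b ha hb k, div_mul_eq_div_div, div_self (alpha_pos a b ha hb k).ne']
  have hS1 : S 1 = 1 / a 1 := by
    simp [hS, hc, alphaSeq]
  -- part 1: positivity
  refine ⟨fun k hk => by rw [key]; exact one_div_pos.mpr (hSpos k hk), ?_, ?_⟩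
  · intro k hk
    rw [key, key]
    exact one_div_lt_one_div_of_lt (hSpos k hk) (hSmono (Nat.lt_succ_self k))
  · -- limit part
    set T : ℝ≥0∞ := ∑' k : ℕ, ENNReal.ofReal (c k) with hT
    have hPsum : ∀ k, (∑ j ∈ Finset.range k, ENNReal.ofReal (c j)) = ENNReal.ofReal (S k) := by
      intro k
      rw [hS, ENNReal.ofReal_sum_of_nonneg (fun j _ => (hcpos j).le)]
    have h1 : Tendsto (fun k => ∑ j ∈ Finset.range k, ENNReal.ofReal (c j)) atTop (𝓝 T) :=
      ENNReal.tendsto_nat_tsum _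
    have h2 : Tendsto (fun k => (∑ j ∈ Finset.range k, ENNReal.ofReal (c j))⁻¹) atTop (𝓝 T⁻¹) :=
      h1.inv
    have hTne : T ≠ 0 := by
      intro h
      have := ENNReal.tsum_eq_zero.mp h 0
      rw [ENNReal.ofReal_eq_zero] at this
      exact absurd this (not_le.mpr (hcpos 0))
    have h3 : Tendsto (fun k => ((∑ j ∈ Finset.range k, ENNReal.ofReal (c j))⁻¹).toReal)
        atTop (𝓝 (T⁻¹).toReal) :=
      (ENNReal.tendsto_toReal (by simp [ENNReal.inv_ne_top, hTne])).comp h2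
    have hlim : Tendsto (fun k => alphaSeq a b k / betaSeq a b k) atTop (𝓝 ((T⁻¹).toReal)) := by
      apply h3.congr'
      filter_upwards [eventually_ge_atTop 1] with k hk
      rw [hPsum, key, ENNReal.toReal_inv, ENNReal.toReal_ofReal (hSpos k hk).le, one_div]
    refine ⟨-(T⁻¹).toReal, by rwa [neg_neg], ?_, by simp [hT, hc]⟩
    constructor
    · rw [neg_lt_neg_iff]
      have hle : (T⁻¹).toReal ≤ 1 / S 2 := by
        apply le_of_tendsto hlim
        filter_upwards [eventually_ge_atTop 2] with k hk
        rw [key]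
        exact one_div_le_one_div_of_le (hSpos 2 (by omega)) (hSmono.monotone hk)
      have h4 : 1 / S 2 < 1 / S 1 :=
        one_div_lt_one_div_of_lt (hSpos 1 (by omega)) (hSmono (by omega))
      rw [hS1, one_div_one_div] at h4
      linarith
    · simp
end

section
/- Assume (A0) and let β̄ := limsup_{k→∞} β_k ∈ [0,∞]. Then exactly one of the following holds: 𝒱 = ∅; 𝒱 = {v_0}; or there exists v_1 ∈ ℝ with 0 < v_1 − v_0 ≤ 1/β̄ (with the convention 1/∞ := 0, so this case forces β̄ < ∞) such that 𝒱 = [v_0, v_1] or 𝒱 = [v_0, v_1). -/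
open Finset Filter Topology MeasureTheory
open scoped ENNReal

section Aux
variable {a b : ℕ → ℝ}

lemma alphaSeq_zero : alphaSeq a b 0 = 1 := by simp [alphaSeq]

lemma betaSeq_zero : betaSeq a b 0 = 0 := by simp [betaSeq]

lemma alphaSeq_succ (k : ℕ) :
    alphaSeq a b (k+1) = alphaSeq a b k * (a (k+1) / b (k+1)) := by
  simp [alphaSeq, Finset.prod_Icc_succ_top (by omega : 1 ≤ k+1)]

lemma alphaSeq_pos (ha : ∀ k, 1 ≤ k → 0 < a k) (hb : ∀ k, 1 ≤ k → 0 < b k)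
    (k : ℕ) : 0 < alphaSeq a b k := by
  refine Finset.prod_pos fun i hi => ?_
  obtain ⟨h1, _⟩ := Finset.mem_Icc.1 hi
  exact div_pos (ha i h1) (hb i h1)

lemma betaSeq_succ (k : ℕ) :
    betaSeq a b (k+1) = (1 + a (k+1) * betaSeq a b k) / b (k+1) := by
  unfold betaSeq
  rw [Finset.sum_Icc_succ_top (by omega : 1 ≤ k+1)]
  have h1 : ∀ j ∈ Finset.Icc 1 k,
      (∏ i ∈ Finset.Icc (j+1) (k+1), a i) / (∏ i ∈ Finset.Icc j (k+1), b i)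
      = (a (k+1) * ((∏ i ∈ Finset.Icc (j+1) k, a i) / (∏ i ∈ Finset.Icc j k, b i)))
          / b (k+1) := by
    intro j hj
    obtain ⟨hj1, hj2⟩ := Finset.mem_Icc.1 hj
    rw [Finset.prod_Icc_succ_top (by omega : j+1 ≤ k+1),
        Finset.prod_Icc_succ_top (by omega : j ≤ k+1)]
    ring
  rw [Finset.sum_congr rfl h1]
  have h2 : Finset.Icc (k+1+1) (k+1) = ∅ := by
    apply Finset.Icc_eq_empty; omega
  rw [h2]
  simp only [Finset.prod_empty, Finset.Icc_self, Finset.prod_singleton]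
  rw [← Finset.sum_div, ← Finset.mul_sum]
  ring

lemma betaSeq_nonneg (ha : ∀ k, 1 ≤ k → 0 < a k) (hb : ∀ k, 1 ≤ k → 0 < b k)
    (k : ℕ) : 0 ≤ betaSeq a b k := by
  refine Finset.sum_nonneg fun j hj => ?_
  obtain ⟨hj1, hj2⟩ := Finset.mem_Icc.1 hj
  apply div_nonneg
  · exact le_of_lt <| Finset.prod_pos fun i hi => ha i (by have := (Finset.mem_Icc.1 hi).1; omega)
  · exact le_of_lt <| Finset.prod_pos fun i hi => hb i (by have := (Finset.mem_Icc.1 hi).1; omega)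

lemma betaSeq_pos (ha : ∀ k, 1 ≤ k → 0 < a k) (hb : ∀ k, 1 ≤ k → 0 < b k)
    (k : ℕ) (hk : 1 ≤ k) : 0 < betaSeq a b k := by
  obtain ⟨m, rfl⟩ : ∃ m, k = m + 1 := ⟨k - 1, by omega⟩
  rw [betaSeq_succ]
  apply div_pos _ (hb _ (by omega))
  nlinarith [ha (m+1) (by omega : 1 ≤ m+1), betaSeq_nonneg ha hb m]

lemma isSTE_all (ha : ∀ k, 1 ≤ k → 0 < a k) (hb : ∀ k, 1 ≤ k → 0 < b k) (v : ℝ) :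
    IsSTE a b (fun k => alphaSeq a b k + v * betaSeq a b k) := by
  constructor
  · simp [alphaSeq_zero, betaSeq_zero]
  · intro i hi
    obtain ⟨m, rfl⟩ : ∃ m, i = m + 1 := ⟨i - 1, by omega⟩
    simp only [Nat.add_sub_cancel]
    have hb1 := (hb (m+1) (by omega)).ne'
    have hb2 := (hb (m+2) (by omega)).ne'
    have hα1 : b (m+1) * alphaSeq a b (m+1) = a (m+1) * alphaSeq a b m := by
      rw [alphaSeq_succ]; field_simp
    have hα2 : b (m+2) * alphaSeq a b (m+2) = a (m+2) * alphaSeq a b (m+1) := by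
      rw [alphaSeq_succ]; field_simp
    have hβ1 : b (m+1) * betaSeq a b (m+1) = 1 + a (m+1) * betaSeq a b m := by
      rw [betaSeq_succ, mul_div_cancel₀ _ hb1]
    have hβ2 : b (m+2) * betaSeq a b (m+2) = 1 + a (m+2) * betaSeq a b (m+1) := by
      rw [betaSeq_succ, mul_div_cancel₀ _ hb2]
    linear_combination hα1 + v * hβ1 - hα2 - v * hβ2

lemma mem_speedSet_iff (ha : ∀ k, 1 ≤ k → 0 < a k) (hb : ∀ k, 1 ≤ k → 0 < b k)
    (v : ℝ) : v ∈ speedSet a b ↔ ∀ k, 1 ≤ k →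
    0 < alphaSeq a b k + v * betaSeq a b k ∧ alphaSeq a b k + v * betaSeq a b k < 1 := by
  constructor
  · rintro ⟨-, h⟩ k hk; exact ⟨(h k hk).1, (h k hk).2⟩
  · intro h; exact ⟨isSTE_all ha hb v, fun k hk => ⟨(h k hk).1, (h k hk).2⟩⟩

lemma ratio_lt (ha : ∀ k, 1 ≤ k → 0 < a k) (hb : ∀ k, 1 ≤ k → 0 < b k)
    (k : ℕ) (hk : 1 ≤ k) :
    alphaSeq a b (k+1) / betaSeq a b (k+1) < alphaSeq a b k / betaSeq a b k := by
  have hβk := betaSeq_pos ha hb k hk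
  have hβk1 := betaSeq_pos ha hb (k+1) (by omega)
  have hb1 := hb (k+1) (by omega)
  have hαpos := alphaSeq_pos ha hb (a := a) (b := b) k
  rw [div_lt_div_iff₀ hβk1 hβk]
  have hα1 : b (k+1) * alphaSeq a b (k+1) = a (k+1) * alphaSeq a b k := by
    rw [alphaSeq_succ]; field_simp
  have hβ1 : b (k+1) * betaSeq a b (k+1) = 1 + a (k+1) * betaSeq a b k := by
    rw [betaSeq_succ, mul_div_cancel₀ _ hb1.ne']
  have key : b (k+1) * (alphaSeq a b k * betaSeq a b (k+1))
      = b (k+1) * (alphaSeq a b (k+1) * betaSeq a b k) + alphaSeq a b k := by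
    linear_combination alphaSeq a b k * hβ1 - betaSeq a b k * hα1
  have hlt : b (k+1) * (alphaSeq a b (k+1) * betaSeq a b k)
      < b (k+1) * (alphaSeq a b k * betaSeq a b (k+1)) := by linarith
  exact lt_of_mul_lt_mul_left hlt hb1.le

end Aux

/-- Under (A0), with betaBar := limsup beta_k in [0,∞], exactly one of:
𝒱 = ∅; 𝒱 = {v0}; or there is v1 with 0 < v1 - v0 ≤ 1/betaBar (convention 1/∞ = 0) such that
𝒱 = [v0, v1] or 𝒱 = [v0, v1). -/
theorem stmt5 (a b : ℕ → ℝ) (ha : ∀ k, 1 ≤ k → 0 < a k) (hb : ∀ k, 1 ≤ k → 0 < b k)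
    (v0 : ℝ)
    (hv0 : Filter.Tendsto (fun k => alphaSeq a b k / betaSeq a b k) Filter.atTop (𝓝 (-v0)))
    (betaBar : ℝ≥0∞)
    (hbb : betaBar
      = Filter.limsup (fun k => ENNReal.ofReal (betaSeq a b k)) Filter.atTop) :
    speedSet a b = ∅ ∨ speedSet a b = {v0} ∨
    ∃ v1 : ℝ, 0 < v1 - v0 ∧ ENNReal.ofReal (v1 - v0) ≤ betaBar⁻¹ ∧
      (speedSet a b = Set.Icc v0 v1 ∨ speedSet a b = Set.Ico v0 v1) := by
  have hq_anti : ∀ m n, 1 ≤ m → m ≤ n →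
      alphaSeq a b n / betaSeq a b n ≤ alphaSeq a b m / betaSeq a b m := by
    intro m n hm hmn
    induction n, hmn using Nat.le_induction with
    | base => exact le_rfl
    | succ n hmn ih => exact le_trans (ratio_lt ha hb n (le_trans hm hmn)).le ih
  have hq_gt : ∀ k, 1 ≤ k → -v0 < alphaSeq a b k / betaSeq a b k := by
    intro k hk
    have h1 : -v0 ≤ alphaSeq a b (k+1) / betaSeq a b (k+1) :=
      le_of_tendsto hv0 (Filter.eventually_atTop.2
        ⟨k+1, fun n hn => hq_anti (k+1) n (by omega) hn⟩)
    exact h1.trans_lt (ratio_lt ha hb k hk)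
  have hpos0 : ∀ k, 1 ≤ k → 0 < alphaSeq a b k + v0 * betaSeq a b k := by
    intro k hk
    have hβ := betaSeq_pos ha hb k hk
    have h := hq_gt k hk
    rw [lt_div_iff₀ hβ] at h
    linarith
  have hlb : ∀ v ∈ speedSet a b, v0 ≤ v := by
    intro v hv
    have hv' := (mem_speedSet_iff ha hb v).1 hv
    have ht : Filter.Tendsto (fun k => -(alphaSeq a b k / betaSeq a b k))
        Filter.atTop (𝓝 v0) := by simpa using hv0.neg
    refine le_of_tendsto ht (Filter.eventually_atTop.2 ⟨1, fun k hk => ?_⟩)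
    have hβ := betaSeq_pos ha hb k hk
    have h := (hv' k hk).1
    rw [neg_le, le_div_iff₀ hβ]
    linarith
  by_cases hemp : speedSet a b = ∅
  · exact Or.inl hemp
  obtain ⟨w, hw⟩ := Set.nonempty_iff_ne_empty.2 hemp
  have hne : (speedSet a b).Nonempty := ⟨w, hw⟩
  have hwS := (mem_speedSet_iff ha hb w).1 hw
  have hv0S : v0 ∈ speedSet a b := by
    rw [mem_speedSet_iff ha hb]
    intro k hk
    refine ⟨hpos0 k hk, ?_⟩
    have h2 := (hwS k hk).2
    have hvw := hlb w hw
    have hβ := betaSeq_pos ha hb k hk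
    nlinarith
  have hbdd : BddAbove (speedSet a b) := by
    refine ⟨(1 - alphaSeq a b 1) / betaSeq a b 1, fun v hv => ?_⟩
    have h := ((mem_speedSet_iff ha hb v).1 hv 1 le_rfl).2
    have hβ := betaSeq_pos ha hb 1 le_rfl
    rw [le_div_iff₀ hβ]
    linarith
  set v1 := sSup (speedSet a b) with hv1def
  have hv0le : v0 ≤ v1 := le_csSup hbdd hv0S
  have hsub : speedSet a b ⊆ Set.Icc v0 v1 := fun v hv => ⟨hlb v hv, le_csSup hbdd hv⟩
  rcases eq_or_lt_of_le hv0le with heq | hlt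
  · refine Or.inr (Or.inl ?_)
    refine Set.Subset.antisymm (fun v hv => ?_) (by simpa using hv0S)
    have h := hsub hv
    rw [← heq] at h
    exact le_antisymm h.2 h.1
  · refine Or.inr (Or.inr ?_)
    have hIco : Set.Ico v0 v1 ⊆ speedSet a b := by
      rintro v ⟨hv0v, hvv1⟩
      obtain ⟨w', hw'S, hvw'⟩ := exists_lt_of_lt_csSup hne hvv1
      rw [mem_speedSet_iff ha hb]
      intro k hk
      have hβ := betaSeq_pos ha hb k hk
      have h1 := hpos0 k hk
      have h2 := ((mem_speedSet_iff ha hb w').1 hw'S k hk).2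
      constructor <;> nlinarith
    have hbound : ∀ k, 1 ≤ k → betaSeq a b k * (v1 - v0) ≤ 1 := by
      intro k hk
      by_contra hcon
      push_neg at hcon
      have hβ := betaSeq_pos ha hb k hk
      have hβinv : 0 < 1 / betaSeq a b k := by positivity
      have hvmem : v0 + 1 / betaSeq a b k ∈ Set.Ico v0 v1 := by
        constructor
        · linarith
        · rw [← lt_sub_iff_add_lt', div_lt_iff₀ hβ]
          linarith
      have h2 := ((mem_speedSet_iff ha hb _).1 (hIco hvmem) k hk).2
      have h1 := hpos0 k hk
      have hcl : betaSeq a b k * (1 / betaSeq a b k) = 1 := by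
        field_simp
      nlinarith
    have hpos : 0 < v1 - v0 := sub_pos.2 hlt
    refine ⟨v1, hpos, ?_, ?_⟩
    · have hls : betaBar ≤ ENNReal.ofReal ((v1 - v0)⁻¹) := by
        rw [hbb]
        refine Filter.limsup_le_of_le (by isBoundedDefault) ?_
        filter_upwards [Filter.eventually_ge_atTop 1] with k hk
        apply ENNReal.ofReal_le_ofReal
        rw [inv_eq_one_div, le_div_iff₀ hpos]
        linarith [hbound k hk]
      calc ENNReal.ofReal (v1 - v0) = (ENNReal.ofReal ((v1 - v0)⁻¹))⁻¹ := by
            rw [ENNReal.ofReal_inv_of_pos hpos, inv_inv]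
        _ ≤ betaBar⁻¹ := ENNReal.inv_le_inv.2 hls
    · by_cases hv1S : v1 ∈ speedSet a b
      · refine Or.inl (Set.Subset.antisymm hsub ?_)
        rintro v ⟨h1, h2⟩
        rcases lt_or_eq_of_le h2 with h | h
        · exact hIco ⟨h1, h⟩
        · rw [h]; exact hv1S
      · refine Or.inr (Set.Subset.antisymm (fun v hv => ?_) hIco)
        exact ⟨hlb v hv, lt_of_le_of_ne (le_csSup hbdd hv) (fun h => hv1S (h ▸ hv))⟩
end

section
/- Assume (A0). Then the following three statements are equivalent: (a) v_0 < 0; (b) Σ_{k≥0} 1/(a_{k+1} α_k) < ∞; (c) Σ_{k≥1} 1/(b_k α_k) < ∞. -/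
open Finset Filter Topology MeasureTheory
open scoped ENNReal

lemma key (a b : ℕ → ℝ) (ha : ∀ k, 1 ≤ k → 0 < a k) (hb : ∀ k, 1 ≤ k → 0 < b k) (k : ℕ) :
    betaSeq a b k = alphaSeq a b k * ∑ m ∈ Finset.range k, 1 / (a (m+1) * alphaSeq a b m) := by
  induction k with
  | zero => simp [betaSeq]
  | succ k ih =>
    have ha' := (ha (k+1) (Nat.le_add_left 1 k)).ne'
    have hb' := (hb (k+1) (Nat.le_add_left 1 k)).ne'
    have hα := (alpha_pos a b ha hb k).ne'
    have hB : betaSeq a b (k+1)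
        = (a (k+1) / b (k+1)) * betaSeq a b k + 1 / b (k+1) := by
      unfold betaSeq
      rw [Finset.sum_Icc_succ_top (Nat.le_add_left 1 k), Finset.mul_sum]
      congr 1
      · apply Finset.sum_congr rfl
        intro j hj
        rw [Finset.mem_Icc] at hj
        rw [Finset.prod_Icc_succ_top (by omega : j+1 ≤ k+1),
            Finset.prod_Icc_succ_top (by omega : j ≤ k+1),
            mul_div_mul_comm, mul_comm]
      · rw [Finset.Icc_eq_empty (by omega), Finset.Icc_self]
        simp
    rw [hB, ih, alpha_succ, Finset.sum_range_succ]
    field_simp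


/-- Under (A0), the following are equivalent: v0 < 0;
sum_{k≥0} 1/(a_{k+1} alpha_k) < ∞; sum_{k≥1} 1/(b_k alpha_k) < ∞. -/
theorem stmt7 (a b : ℕ → ℝ) (ha : ∀ k, 1 ≤ k → 0 < a k) (hb : ∀ k, 1 ≤ k → 0 < b k)
    (v0 : ℝ)
    (hv0 : Filter.Tendsto (fun k => alphaSeq a b k / betaSeq a b k) Filter.atTop (𝓝 (-v0))) :
    (v0 < 0 ↔ Summable (fun k : ℕ => 1 / (a (k+1) * alphaSeq a b k))) ∧
    (v0 < 0 ↔ Summable (fun k : ℕ => 1 / (b (k+1) * alphaSeq a b (k+1)))) := by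
  set f : ℕ → ℝ := fun k => 1 / (a (k+1) * alphaSeq a b k) with hf
  have hfpos : ∀ k, 0 < f k := fun k =>
    one_div_pos.2 (mul_pos (ha (k+1) (Nat.le_add_left 1 k)) (alpha_pos a b ha hb k))
  have hfeq : (fun k : ℕ => 1 / (b (k+1) * alphaSeq a b (k+1))) = f := by
    funext k
    have hb' := (hb (k+1) (Nat.le_add_left 1 k)).ne'
    rw [hf, alpha_succ]
    field_simp
  have hratio : ∀ k, alphaSeq a b k / betaSeq a b k
      = (∑ m ∈ Finset.range k, f m)⁻¹ := by
    intro k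
    rw [key a b ha hb k, div_mul_cancel_left₀ (alpha_pos a b ha hb k).ne']
  have hv0' : Filter.Tendsto (fun k => (∑ m ∈ Finset.range k, f m)⁻¹)
      Filter.atTop (𝓝 (-v0)) := by
    simpa only [hratio] using hv0
  have main : v0 < 0 ↔ Summable f := by
    constructor
    · intro hlt
      by_contra hns
      have hS : Filter.Tendsto (fun n => ∑ m ∈ Finset.range n, f m) Filter.atTop Filter.atTop :=
        (not_summable_iff_tendsto_nat_atTop_of_nonneg (fun k => (hfpos k).le)).1 hns
      have : Filter.Tendsto (fun k => (∑ m ∈ Finset.range k, f m)⁻¹)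
          Filter.atTop (𝓝 0) := tendsto_inv_atTop_zero.comp hS
      have h0 : -v0 = 0 := tendsto_nhds_unique hv0' this
      linarith
    · intro hsum
      have hLpos : 0 < ∑' k, f k := Summable.tsum_pos hsum (fun k => (hfpos k).le) 0 (hfpos 0)
      have hS : Filter.Tendsto (fun n => ∑ m ∈ Finset.range n, f m)
          Filter.atTop (𝓝 (∑' k, f k)) := hsum.hasSum.tendsto_sum_nat
      have : Filter.Tendsto (fun k => (∑ m ∈ Finset.range k, f m)⁻¹)
          Filter.atTop (𝓝 (∑' k, f k)⁻¹) := hS.inv₀ hLpos.ne'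
      have h0 : -v0 = (∑' k, f k)⁻¹ := tendsto_nhds_unique hv0' this
      have : 0 < -v0 := h0 ▸ inv_pos.2 hLpos
      linarith
  exact ⟨main, by rw [hfeq]; exact main⟩
end
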